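/- Let d ≥ 1 and 0 < Δ < 1/4. Say a point z ∈ [0,1]^d lies in a corner cube of side 2Δ if there is a vertex v ∈ {0,1}^d with |z_k − v_k| ≤ 2Δ for every coordinate k. If x, y ∈ [0,1]^d and neither x nor y lies in any of the 2^d corner cubes of side 2Δ, then ‖x − y‖₂ ≤ √(d − 1 + (1 − 4Δ)²). -/

import Mathlib

open MeasureTheory Real

noncomputable section

/-- The uniform probability measure on the unit cube `[0,1]^d`. -/
def cubeMeasure (d : ℕ) : Measure (Fin d → ℝ) :=
  Measure.pi fun _ => volume.restrict (Set.Icc (0 : ℝ) 1)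

/-- The joint law of `n` i.i.d. points, each uniform on `[0,1]^d`. -/
def sampleMeasure (d n : ℕ) : Measure (Fin n → Fin d → ℝ) :=
  Measure.pi fun _ => cubeMeasure d

/-- Euclidean distance on `Fin d → ℝ`. -/
def eDist {d : ℕ} (x y : Fin d → ℝ) : ℝ :=
  Real.sqrt (∑ k, (x k - y k) ^ 2)

lemma eDist_comm {d : ℕ} (x y : Fin d → ℝ) : eDist x y = eDist y x := by
  unfold eDist
  congr 1
  exact Finset.sum_congr rfl fun k _ => by ring

/-- The geometric graph on the points `x 0, …, x (n-1)` with radius `r`: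
distinct `i`, `j` are adjacent iff the Euclidean distance of `x i` and `x j` is at most `r`. -/
def geomGraph {d n : ℕ} (x : Fin n → Fin d → ℝ) (r : ℝ) : SimpleGraph (Fin n) where
  Adj i j := i ≠ j ∧ eDist (x i) (x j) ≤ r
  symm := ⟨fun i j h => ⟨h.1.symm, by rw [eDist_comm]; exact h.2⟩⟩
  loopless := ⟨fun i h => h.1 rfl⟩

/-- A graph property (on labelled vertex sets `Fin m`) is closed under isomorphism. -/
def IsoClosed (A : ∀ m, SimpleGraph (Fin m) → Prop) : Prop :=
  ∀ m, ∀ G G' : SimpleGraph (Fin m), Nonempty (G ≃g G') → (A m G ↔ A m G')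

/-- A graph property is increasing: preserved by adding edges. -/
def IncreasingProp (A : ∀ m, SimpleGraph (Fin m) → Prop) : Prop :=
  ∀ m, ∀ G G' : SimpleGraph (Fin m), G ≤ G' → A m G → A m G'

/-- The probability that a random geometric graph on `n` uniform points in `[0,1]^d`
with radius `r` satisfies the property `A`. -/
def geomProb (d n : ℕ) (A : ∀ m, SimpleGraph (Fin m) → Prop) (r : ℝ) : ENNReal :=
  sampleMeasure d n {x | A n (geomGraph x r)}

/-- Threshold radius `r_A(n, ε)`. -/
def thresholdRadius (d n : ℕ) (A : ∀ m, SimpleGraph (Fin m) → Prop) (ε : ℝ) : ℝ :=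
  sInf {r : ℝ | 0 < r ∧ ENNReal.ofReal ε ≤ geomProb d n A r}

/-- Threshold width `δ_A(n, ε) = r_A(n, 1-ε) - r_A(n, ε)`. -/
def thresholdWidth (d n : ℕ) (A : ∀ m, SimpleGraph (Fin m) → Prop) (ε : ℝ) : ℝ :=
  thresholdRadius d n A (1 - ε) - thresholdRadius d n A ε

/-- The bottleneck matching weight between the point sets `x` and `y`. -/
def bottleneck {d n : ℕ} (x y : Fin n → Fin d → ℝ) : ℝ :=
  ⨅ φ : Equiv.Perm (Fin n), ⨆ i, eDist (x i) (y (φ i))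

/-- The joint law of two independent samples of `n` uniform points in `[0,1]^d`. -/
def pairMeasure (d n : ℕ) : Measure ((Fin n → Fin d → ℝ) × (Fin n → Fin d → ℝ)) :=
  (sampleMeasure d n).prod (sampleMeasure d n)

/-- `G` is isomorphic to a subgraph of `G'`. -/
def IsSubgraphIso {n m : ℕ} (G : SimpleGraph (Fin n)) (G' : SimpleGraph (Fin m)) : Prop :=
  ∃ f : Fin n ↪ Fin m, ∀ i j, G.Adj i j → G'.Adj (f i) (f j)

/-- The property: every vertex has degree at least a quarter of the number of vertices. -/
def minDegProp : ∀ m, SimpleGraph (Fin m) → Prop :=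
  fun m G => ∀ v, (m : ℝ) / 4 ≤ ((G.neighborSet v).ncard : ℝ)

/-- The property of being a complete graph. -/
def completeProp : ∀ m, SimpleGraph (Fin m) → Prop :=
  fun m G => ∀ i j : Fin m, i ≠ j → G.Adj i j

/-- `z ∈ [0,1]^d` lies in the corner cube of side `2Δ` at some vertex `v ∈ {0,1}^d`. -/
def inCornerCube (d : ℕ) (Δ : ℝ) (z : Fin d → ℝ) : Prop :=
  ∃ v : Fin d → Bool, ∀ k, |z k - (if v k then 1 else 0)| ≤ 2 * Δ

/-
A point of `[0,1]^d` outside every corner cube of side `2Δ` has a central coordinate, one in the open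
interval `(2Δ, 1 - 2Δ)`: otherwise rounding each coordinate to the nearest of `0, 1` gives a vertex whose
corner cube contains it. Every coordinate contributes at most `1` to `‖x - y‖²`. If `x` and `y` are
central in the same coordinate, that coordinate contributes at most `(1 - 4Δ)²`; if they are central
in different coordinates, those two contribute at most `(1 - 2Δ)²` each, and
`2 (1 - 2Δ)² ≤ 1 + (1 - 4Δ)²`.
-/

open Finset

lemma exists_mem_Ioo_of_not_inCornerCube {d : ℕ} {Δ : ℝ} {z : Fin d → ℝ}
    (hz : ∀ k, z k ∈ Set.Icc (0 : ℝ) 1) (hzc : ¬ inCornerCube d Δ z) :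
    ∃ k, z k ∈ Set.Ioo (2 * Δ) (1 - 2 * Δ) := by
  by_contra! hcentral
  refine hzc ⟨fun k => decide (1 / 2 ≤ z k), fun k => ?_⟩
  obtain ⟨hz₀, hz₁⟩ := hz k
  have hside : z k ≤ 2 * Δ ∨ 1 - 2 * Δ ≤ z k := by
    simpa only [Set.mem_Ioo, not_and_or, not_lt] using hcentral k
  by_cases hk : 1 / 2 ≤ z k
  · simp only [hk, decide_true, if_true, abs_le]
    constructor <;> rcases hside with h | h <;> linarith
  · simp only [hk, decide_false, Bool.false_eq_true, if_false, sub_zero, abs_le]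
    constructor <;> rcases hside with h | h <;> linarith

lemma Finset.sum_le_card_sub_card_add {ι : Type*} [DecidableEq ι] {s t : Finset ι} {f : ι → ℝ}
    (hts : t ⊆ s) (hf : ∀ i ∈ s, f i ≤ 1) : ∑ i ∈ s, f i ≤ (#s - #t : ℝ) + ∑ i ∈ t, f i := by
  rw [← sum_sdiff hts]
  gcongr
  calc ∑ i ∈ s \ t, f i ≤ ∑ _i ∈ s \ t, (1 : ℝ) := sum_le_sum fun i hi => hf i (sdiff_subset hi)
    _ = #s - #t := by
      rw [sum_const, card_sdiff_of_subset hts, nsmul_one, Nat.cast_sub (card_le_card hts)]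

theorem stmt16_general (d : ℕ) (Δ : ℝ)
    (x y : Fin d → ℝ) (hx : ∀ k, x k ∈ Set.Icc (0 : ℝ) 1) (hy : ∀ k, y k ∈ Set.Icc (0 : ℝ) 1)
    (hxc : ¬ inCornerCube d Δ x) (hyc : ¬ inCornerCube d Δ y) :
    eDist x y ≤ Real.sqrt ((d : ℝ) - 1 + (1 - 4 * Δ) ^ 2) := by
  obtain ⟨i, hxi₀, hxi₁⟩ := exists_mem_Ioo_of_not_inCornerCube hx hxc
  obtain ⟨j, hyj₀, hyj₁⟩ := exists_mem_Ioo_of_not_inCornerCube hy hyc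
  have hle : ∀ k ∈ univ, (x k - y k) ^ 2 ≤ 1 := fun k _ => by
    obtain ⟨⟨hxk₀, hxk₁⟩, hyk₀, hyk₁⟩ := And.intro (hx k) (hy k)
    exact sq_le_one_iff_abs_le_one _ |>.2 (abs_le.2 ⟨by linarith, by linarith⟩)
  refine Real.sqrt_le_sqrt ?_
  rcases eq_or_ne i j with rfl | hij
  · have hi : (x i - y i) ^ 2 ≤ (1 - 4 * Δ) ^ 2 := sq_le_sq' (by linarith) (by linarith)
    calc ∑ k, (x k - y k) ^ 2 ≤ (d - 1 : ℝ) + (x i - y i) ^ 2 := by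
          simpa using sum_le_card_sub_card_add (subset_univ {i}) hle
      _ ≤ _ := by linarith
  · obtain ⟨⟨hxj₀, hxj₁⟩, hyi₀, hyi₁⟩ := And.intro (hx j) (hy i)
    have hi : (x i - y i) ^ 2 ≤ (1 - 2 * Δ) ^ 2 := sq_le_sq' (by linarith) (by linarith)
    have hj : (x j - y j) ^ 2 ≤ (1 - 2 * Δ) ^ 2 := sq_le_sq' (by linarith) (by linarith)
    calc ∑ k, (x k - y k) ^ 2 ≤ (d - 2 : ℝ) + ((x i - y i) ^ 2 + (x j - y j) ^ 2) := by
          simpa [card_pair hij, sum_pair hij] using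
            sum_le_card_sub_card_add (subset_univ {i, j}) hle
      _ ≤ _ := by nlinarith [sq_nonneg Δ]

/-- two points of `[0,1]^d` avoiding all `2^d` corner cubes of side `2Δ`
are at Euclidean distance at most `√(d - 1 + (1 - 4Δ)²)`. -/
theorem stmt16 (d : ℕ) (hd : 1 ≤ d) (Δ : ℝ) (h0 : 0 < Δ) (h1 : Δ < 1 / 4)
    (x y : Fin d → ℝ) (hx : ∀ k, x k ∈ Set.Icc (0 : ℝ) 1) (hy : ∀ k, y k ∈ Set.Icc (0 : ℝ) 1)
    (hxc : ¬ inCornerCube d Δ x) (hyc : ¬ inCornerCube d Δ y) :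
    eDist x y ≤ Real.sqrt ((d : ℝ) - 1 + (1 - 4 * Δ) ^ 2) :=
  stmt16_general d Δ x y hx hy hxc hyc

end
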